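/- arXiv:2212.14105 — 3 statements merged into one kernel-verified Lean document; each statement's English description precedes it below -/
import Mathlib

section
/- For a non-binary real-valued outcome Y, under random assignment, treatment monotonicity, and outcome monotonicity P(Y1 ≥ Y0) = 1, the reduced form identifies the supercomplier share scaled by the supercomplier average treatment effect: Pr(D1>D0, Y1>Y0)·E[Y1 − Y0 | D1>D0, Y1>Y0] = E[Y | Z=1] − E[Y | Z=0]. -/
open MeasureTheory ProbabilityTheory

/-- Conditional mean of `f` given event `s`. -/
noncomputable def cmean {Ω : Type} [MeasurableSpace Ω] (μ : Measure Ω)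
    (f : Ω → ℝ) (s : Set Ω) : ℝ :=
  (∫ ω in s, f ω ∂μ) / (μ s).toReal

/-!
On `{Z = z}` the observed outcome is `Y0 + D_z (Y1 - Y0)`, a function of the potential
outcomes, which are independent of `Z`; so the conditional mean of `Y` given `Z = z` is the
unconditional mean `E[Y0 + D_z (Y1 - Y0)]`, and the reduced form is `E[(D1 - D0)(Y1 - Y0)]`.
When `D0, D1` are binary and both monotonicities hold, `(D1 - D0)(Y1 - Y0)` vanishes off the
supercompliers `{D0 < D1, Y0 < Y1}` and equals `Y1 - Y0` on them.
-/

lemma sub_mul_sub_eq_ite_of_binary {d0 d1 y0 y1 : ℝ} (h0 : d0 = 0 ∨ d0 = 1)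
    (h1 : d1 = 0 ∨ d1 = 1) (hd : d0 ≤ d1) (hy : y0 ≤ y1) :
    (d1 - d0) * (y1 - y0) = if d0 < d1 ∧ y0 < y1 then y1 - y0 else 0 := by
  rcases h0 with rfl | rfl <;> rcases h1 with rfl | rfl
  · simp
  · simp only [sub_zero, one_mul, zero_lt_one, true_and]
    split_ifs with h
    · rfl
    · linarith [not_lt.1 h]
  · norm_num at hd
  · simp

section

variable {Ω : Type} [MeasurableSpace Ω] {μ : Measure Ω}

lemma cmean_congr {f g : Ω → ℝ} {s : Set Ω} (hs : MeasurableSet s) (h : Set.EqOn f g s) :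
    cmean μ f s = cmean μ g s := by
  rw [cmean, cmean, setIntegral_congr_fun hs h]

lemma toReal_measure_mul_cmean {f : Ω → ℝ} {s : Set Ω} (hs : μ s ≠ ⊤) :
    (μ s).toReal * cmean μ f s = ∫ ω in s, f ω ∂μ := by
  rw [cmean]
  rcases eq_or_ne (μ s).toReal 0 with h | h
  · have hs0 : μ s = 0 := ((ENNReal.toReal_eq_zero_iff _).1 h).resolve_right hs
    simp [h, Measure.restrict_eq_zero.2 hs0]
  · field_simp

lemma ProbabilityTheory.IndepFun.cmean_setOf_eq_integral {𝓧 β : Type*} [MeasurableSpace 𝓧]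
    [MeasurableSpace β] [MeasurableSingletonClass β] [IsFiniteMeasure μ] {V : Ω → 𝓧} {Z : Ω → β}
    (hVZ : IndepFun V Z μ) (hV : AEMeasurable V μ) (hZ : Measurable Z) {f : 𝓧 → ℝ}
    (hf : Measurable f) {z : β} (hz : μ {ω | Z ω = z} ≠ 0) {Y : Ω → ℝ}
    (hY : ∀ ω, Z ω = z → Y ω = f (V ω)) :
    cmean μ Y {ω | Z ω = z} = ∫ ω, f (V ω) ∂μ := by
  have hZz : MeasurableSet[MeasurableSpace.comap Z inferInstance] {ω | Z ω = z} :=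
    ⟨{z}, measurableSet_singleton z, rfl⟩
  rw [cmean_congr (hZ.comap_le _ hZz) hY, cmean,
    Indep.setIntegral_eq_mul hZ.comap_le hVZ.symm hV hZz hf.aestronglyMeasurable,
    measureReal_def, mul_div_cancel_left₀]
  exact ENNReal.toReal_ne_zero.2 ⟨hz, measure_ne_top μ _⟩

lemma integrable_add_mul_sub_of_binary {Y0 Y1 D : Ω → ℝ} (hY0 : Integrable Y0 μ)
    (hY1 : Integrable Y1 μ) (hD : AEStronglyMeasurable D μ) (hbin : ∀ᵐ ω ∂μ, D ω = 0 ∨ D ω = 1) :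
    Integrable (fun ω => Y0 ω + D ω * (Y1 ω - Y0 ω)) μ :=
  hY0.add ((hY1.sub hY0).bdd_mul (c := 1) hD
    (hbin.mono fun ω h => by rcases h with h | h <;> simp [h]))

lemma measure_setOf_eq_zero_of_binary [IsProbabilityMeasure μ] {Z : Ω → ℝ} (hZ : Measurable Z)
    (hbin : ∀ ω, Z ω = 0 ∨ Z ω = 1) :
    μ {ω | Z ω = 0} = 1 - μ {ω | Z ω = 1} := by
  have hcompl : {ω | Z ω = 0} = {ω | Z ω = 1}ᶜ := by
    ext ω
    rcases hbin ω with h | h <;> simp [h]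
  rw [hcompl]
  exact prob_compl_eq_one_sub (hZ (measurableSet_singleton 1))

lemma setIntegral_setOf_lt_and_lt_eq_integral_sub_mul_sub {D0 D1 Y0 Y1 : Ω → ℝ}
    (hD0m : Measurable D0) (hD1m : Measurable D1) (hY0m : Measurable Y0) (hY1m : Measurable Y1)
    (hD0bin : ∀ᵐ ω ∂μ, D0 ω = 0 ∨ D0 ω = 1) (hD1bin : ∀ᵐ ω ∂μ, D1 ω = 0 ∨ D1 ω = 1)
    (hmonoD : ∀ᵐ ω ∂μ, D0 ω ≤ D1 ω)
    (hmonoY : ∀ᵐ ω ∂μ, Y0 ω ≤ Y1 ω) :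
    ∫ ω in {ω | D0 ω < D1 ω ∧ Y0 ω < Y1 ω}, (Y1 ω - Y0 ω) ∂μ
      = ∫ ω, (D1 ω - D0 ω) * (Y1 ω - Y0 ω) ∂μ := by
  rw [← integral_indicator (s := {ω | D0 ω < D1 ω ∧ Y0 ω < Y1 ω})
    ((measurableSet_lt hD0m hD1m).inter (measurableSet_lt hY0m hY1m))]
  refine integral_congr_ae ?_
  filter_upwards [hD0bin, hD1bin, hmonoD, hmonoY] with ω h0 h1 hd hy
  rw [Set.indicator_apply]
  exact (sub_mul_sub_eq_ite_of_binary h0 h1 hd hy).symm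

end

theorem reduced_form_non_binary_outcome_general
    {Ω : Type} [MeasurableSpace Ω] (μ : Measure Ω) [IsProbabilityMeasure μ]
    (Z D0 D1 : Ω → ℝ) (Y0 Y1 : Ω → ℝ) (D Y : Ω → ℝ)
    (hZm : Measurable Z) (hD0m : Measurable D0) (hD1m : Measurable D1)
    (hY0m : Measurable Y0) (hY1m : Measurable Y1)
    (hZbin : ∀ ω, Z ω = 0 ∨ Z ω = 1)
    (hD0bin : ∀ ω, D0 ω = 0 ∨ D0 ω = 1)
    (hD1bin : ∀ ω, D1 ω = 0 ∨ D1 ω = 1)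
    (hY0int : Integrable Y0 μ) (hY1int : Integrable Y1 μ)
    (hD : ∀ ω, D ω = Z ω * D1 ω + (1 - Z ω) * D0 ω)
    (hY : ∀ ω, Y ω = D ω * Y1 ω + (1 - D ω) * Y0 ω)
    (hindep : IndepFun (fun ω => (Y0 ω, Y1 ω, D0 ω, D1 ω)) Z μ)
    (hz0 : 0 < μ {ω | Z ω = 1}) (hz1 : μ {ω | Z ω = 1} < 1)
    (hmonoD : ∀ᵐ ω ∂μ, D0 ω ≤ D1 ω)
    (hmonoY : ∀ᵐ ω ∂μ, Y0 ω ≤ Y1 ω) :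
    (μ {ω | D0 ω < D1 ω ∧ Y0 ω < Y1 ω}).toReal
        * cmean μ (fun ω => Y1 ω - Y0 ω) {ω | D0 ω < D1 ω ∧ Y0 ω < Y1 ω}
      = cmean μ Y {ω | Z ω = 1} - cmean μ Y {ω | Z ω = 0} := by
  have hV : AEMeasurable (fun ω => (Y0 ω, Y1 ω, D0 ω, D1 ω)) μ := by fun_prop
  have hZ0ne : μ {ω | Z ω = 0} ≠ 0 := by
    rw [measure_setOf_eq_zero_of_binary hZm hZbin]
    exact (tsub_pos_of_lt hz1).ne'
  have hY1 : cmean μ Y {ω | Z ω = 1} = ∫ ω, Y0 ω + D1 ω * (Y1 ω - Y0 ω) ∂μ :=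
    hindep.cmean_setOf_eq_integral hV hZm (f := fun p => p.1 + p.2.2.2 * (p.2.1 - p.1))
      (by fun_prop) hz0.ne' fun ω hω => by simp only [hY, hD, hω]; ring
  have hY0 : cmean μ Y {ω | Z ω = 0} = ∫ ω, Y0 ω + D0 ω * (Y1 ω - Y0 ω) ∂μ :=
    hindep.cmean_setOf_eq_integral hV hZm (f := fun p => p.1 + p.2.2.1 * (p.2.1 - p.1))
      (by fun_prop) hZ0ne fun ω hω => by simp only [hY, hD, hω]; ring
  rw [toReal_measure_mul_cmean (measure_ne_top μ _),
    setIntegral_setOf_lt_and_lt_eq_integral_sub_mul_sub hD0m hD1m hY0m hY1m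
      (ae_of_all _ hD0bin) (ae_of_all _ hD1bin) hmonoD hmonoY,
    hY1, hY0, ← integral_sub
      (integrable_add_mul_sub_of_binary hY0int hY1int hD1m.aestronglyMeasurable
        (ae_of_all _ hD1bin))
      (integrable_add_mul_sub_of_binary hY0int hY1int hD0m.aestronglyMeasurable
        (ae_of_all _ hD0bin))]
  congr 1 with ω
  ring

theorem reduced_form_non_binary_outcome
    {Ω : Type} [MeasurableSpace Ω] (μ : Measure Ω) [IsProbabilityMeasure μ]
    (Z D0 D1 : Ω → ℝ) (Y0 Y1 : Ω → ℝ) (D Y : Ω → ℝ)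
    (hZm : Measurable Z) (hD0m : Measurable D0) (hD1m : Measurable D1)
    (hY0m : Measurable Y0) (hY1m : Measurable Y1)
    (hZbin : ∀ ω, Z ω = 0 ∨ Z ω = 1)
    (hD0bin : ∀ ω, D0 ω = 0 ∨ D0 ω = 1)
    (hD1bin : ∀ ω, D1 ω = 0 ∨ D1 ω = 1)
    (hY0int : Integrable Y0 μ) (hY1int : Integrable Y1 μ)
    (hD : ∀ ω, D ω = Z ω * D1 ω + (1 - Z ω) * D0 ω)
    (hY : ∀ ω, Y ω = D ω * Y1 ω + (1 - D ω) * Y0 ω)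
    (hindep : IndepFun (fun ω => (Y0 ω, Y1 ω, D0 ω, D1 ω)) Z μ)
    (hz0 : 0 < μ {ω | Z ω = 1}) (hz1 : μ {ω | Z ω = 1} < 1)
    (hmonoD : ∀ᵐ ω ∂μ, D0 ω ≤ D1 ω)
    (hmonoY : ∀ᵐ ω ∂μ, Y0 ω ≤ Y1 ω)
    (hcc : 0 < μ {ω | D0 ω < D1 ω ∧ Y0 ω < Y1 ω}) :
    (μ {ω | D0 ω < D1 ω ∧ Y0 ω < Y1 ω}).toReal
        * cmean μ (fun ω => Y1 ω - Y0 ω) {ω | D0 ω < D1 ω ∧ Y0 ω < Y1 ω}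
      = cmean μ Y {ω | Z ω = 1} - cmean μ Y {ω | Z ω = 0} :=
  reduced_form_non_binary_outcome_general μ Z D0 D1 Y0 Y1 D Y hZm hD0m hD1m hY0m hY1m hZbin hD0bin
    hD1bin hY0int hY1int hD hY hindep hz0 hz1 hmonoD hmonoY
end

section
/- For a non-binary outcome, under the assumptions of the previous result plus independence of X from Z jointly with the potential outcomes, the Wald estimand identifies the treatment-effect-weighted supercomplier characteristics: E[h(X)(Y1−Y0) | G=cc] / E[Y1−Y0 | G=cc] = (E[h(X)Y|Z=1] − E[h(X)Y|Z=0]) / (E[Y|Z=1] − E[Y|Z=0]), where G=cc is the event {D1>D0, Y1>Y0}. -/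
open MeasureTheory ProbabilityTheory

/-!
On `{Z = z}` the observed outcome is `Y0 + D_z (Y1 - Y0)`, a function of `(X, Y0, Y1, D0, D1)`,
and since these are independent of `Z`, conditioning on `{Z = z}` does not change its mean.
So the difference of the two conditional means of `c Y` is `E[c (D1 - D0) (Y1 - Y0)]`, and by the
two monotonicity assumptions the integrand vanishes outside `{D1 > D0, Y1 > Y0}`, where it equals
`c (Y1 - Y0)`. Taking `c = h(X)` and `c = 1` and dividing, the factor `P(D1 > D0, Y1 > Y0)` cancels.
-/

section

variable {Ω : Type} [MeasurableSpace Ω] {μ : Measure Ω}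

lemma ProbabilityTheory.IndepFun.setIntegral_preimage_eq_mul {β : Type*} [MeasurableSpace β]
    {V : Ω → ℝ} {Z : Ω → β} (hind : IndepFun V Z μ) (hV : AEMeasurable V μ) (hZ : Measurable Z)
    {B : Set β} (hB : MeasurableSet B) :
    ∫ ω in Z ⁻¹' B, V ω ∂μ = μ.real (Z ⁻¹' B) * ∫ ω, V ω ∂μ :=
  Indep.setIntegral_eq_mul (f := id) hZ.comap_le hind.symm hV ⟨B, hB, rfl⟩
    measurable_id.aestronglyMeasurable

lemma cmean_eq_integral_of_indepFun [IsFiniteMeasure μ] {β : Type*} [MeasurableSpace β]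
    {V W : Ω → ℝ} {Z : Ω → β} (hind : IndepFun V Z μ) (hV : AEMeasurable V μ)
    (hZ : Measurable Z) {B : Set β} (hB : MeasurableSet B) (hpos : μ (Z ⁻¹' B) ≠ 0)
    (hWV : Set.EqOn W V (Z ⁻¹' B)) :
    cmean μ W (Z ⁻¹' B) = ∫ ω, V ω ∂μ := by
  have hreal : μ.real (Z ⁻¹' B) ≠ 0 := ENNReal.toReal_ne_zero.mpr ⟨hpos, measure_ne_top μ _⟩
  rw [cmean, setIntegral_congr_fun (hZ hB) hWV, hind.setIntegral_preimage_eq_mul hV hZ hB,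
    ← measureReal_def, mul_div_cancel_left₀ _ hreal]

-- If `μ s = 0`, both sides are `0` by the convention `x / 0 = 0`.
lemma cmean_div_cmean [IsFiniteMeasure μ] (f g : Ω → ℝ) (s : Set Ω) :
    cmean μ f s / cmean μ g s = (∫ ω in s, f ω ∂μ) / ∫ ω in s, g ω ∂μ := by
  rcases eq_or_ne (μ s) 0 with hs | hs
  · simp [cmean, Measure.restrict_eq_zero.mpr hs]
  · exact div_div_div_cancel_right₀ (ENNReal.toReal_ne_zero.mpr ⟨hs, measure_ne_top μ s⟩) _ _

lemma sub_mul_sub_eq_ite {d₀ d₁ y₀ y₁ : ℝ} (hd₀ : d₀ = 0 ∨ d₀ = 1) (hd₁ : d₁ = 0 ∨ d₁ = 1)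
    (hd : d₀ ≤ d₁) (hy : y₀ ≤ y₁) :
    (d₁ - d₀) * (y₁ - y₀) = if d₀ < d₁ ∧ y₀ < y₁ then y₁ - y₀ else 0 := by
  rcases hd₀ with rfl | rfl <;> rcases hd₁ with rfl | rfl <;> split_ifs with h
    <;> simp at h hd ⊢ <;> linarith

lemma integral_mul_sub_mul_sub_eq_setIntegral {c D0 D1 Y0 Y1 : Ω → ℝ}
    (hD0m : Measurable D0) (hD1m : Measurable D1) (hY0m : Measurable Y0) (hY1m : Measurable Y1)
    (hD0bin : ∀ ω, D0 ω = 0 ∨ D0 ω = 1) (hD1bin : ∀ ω, D1 ω = 0 ∨ D1 ω = 1)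
    (hmonoD : ∀ᵐ ω ∂μ, D0 ω ≤ D1 ω) (hmonoY : ∀ᵐ ω ∂μ, Y0 ω ≤ Y1 ω) :
    ∫ ω, c ω * ((D1 ω - D0 ω) * (Y1 ω - Y0 ω)) ∂μ
      = ∫ ω in {ω | D0 ω < D1 ω ∧ Y0 ω < Y1 ω}, c ω * (Y1 ω - Y0 ω) ∂μ := by
  have hcc : MeasurableSet {ω | D0 ω < D1 ω ∧ Y0 ω < Y1 ω} :=
    (measurableSet_lt hD0m hD1m).inter (measurableSet_lt hY0m hY1m)
  rw [← integral_indicator hcc]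
  refine integral_congr_ae ?_
  filter_upwards [hmonoD, hmonoY] with ω hd hy
  rw [sub_mul_sub_eq_ite (hD0bin ω) (hD1bin ω) hd hy]
  by_cases hω : D0 ω < D1 ω ∧ Y0 ω < Y1 ω <;> simp [hω]

lemma cmean_sub_cmean_eq_setIntegral [IsFiniteMeasure μ] {Z D0 D1 Y0 Y1 D Y c : Ω → ℝ}
    (hZm : Measurable Z) (hD0m : Measurable D0) (hD1m : Measurable D1)
    (hY0m : Measurable Y0) (hY1m : Measurable Y1)
    (hD0bin : ∀ ω, D0 ω = 0 ∨ D0 ω = 1) (hD1bin : ∀ ω, D1 ω = 0 ∨ D1 ω = 1)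
    (hD : ∀ ω, D ω = Z ω * D1 ω + (1 - Z ω) * D0 ω)
    (hY : ∀ ω, Y ω = D ω * Y1 ω + (1 - D ω) * Y0 ω)
    (hc0 : Integrable (fun ω => c ω * Y0 ω) μ) (hc1 : Integrable (fun ω => c ω * Y1 ω) μ)
    (hindep : IndepFun (fun ω => (c ω, Y0 ω, Y1 ω, D0 ω, D1 ω)) Z μ)
    (hZ1 : μ {ω | Z ω = 1} ≠ 0) (hZ0 : μ {ω | Z ω = 0} ≠ 0)
    (hmonoD : ∀ᵐ ω ∂μ, D0 ω ≤ D1 ω) (hmonoY : ∀ᵐ ω ∂μ, Y0 ω ≤ Y1 ω) :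
    cmean μ (fun ω => c ω * Y ω) {ω | Z ω = 1} - cmean μ (fun ω => c ω * Y ω) {ω | Z ω = 0}
      = ∫ ω in {ω | D0 ω < D1 ω ∧ Y0 ω < Y1 ω}, c ω * (Y1 ω - Y0 ω) ∂μ := by
  -- `W d` is `c` times the outcome realised under the treatment assignment `d`
  set W : (Ω → ℝ) → Ω → ℝ := fun d ω => c ω * Y0 ω + d ω * (c ω * Y1 ω - c ω * Y0 ω)
  have hWint (d : Ω → ℝ) (hd : Measurable d) (hdbin : ∀ ω, d ω = 0 ∨ d ω = 1) :
      Integrable (W d) μ := by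
    refine hc0.add ((hc1.sub hc0).bdd_mul (c := 1) hd.aestronglyMeasurable ?_)
    filter_upwards with ω
    rcases hdbin ω with h | h <;> simp [h]
  have hW1 : cmean μ (fun ω => c ω * Y ω) {ω | Z ω = 1} = ∫ ω, W D1 ω ∂μ := by
    have hind : IndepFun (W D1) Z μ :=
      hindep.comp (φ := fun p : ℝ × ℝ × ℝ × ℝ × ℝ =>
        p.1 * p.2.1 + p.2.2.2.2 * (p.1 * p.2.2.1 - p.1 * p.2.1)) (by fun_prop) measurable_id
    refine cmean_eq_integral_of_indepFun (B := {1}) hind (hWint D1 hD1m hD1bin).aemeasurable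
      hZm (measurableSet_singleton 1) hZ1 ?_
    intro ω (hz : Z ω = 1)
    simp only [W, hY, hD, hz]
    ring
  have hW0 : cmean μ (fun ω => c ω * Y ω) {ω | Z ω = 0} = ∫ ω, W D0 ω ∂μ := by
    have hind : IndepFun (W D0) Z μ :=
      hindep.comp (φ := fun p : ℝ × ℝ × ℝ × ℝ × ℝ =>
        p.1 * p.2.1 + p.2.2.2.1 * (p.1 * p.2.2.1 - p.1 * p.2.1)) (by fun_prop) measurable_id
    refine cmean_eq_integral_of_indepFun (B := {0}) hind (hWint D0 hD0m hD0bin).aemeasurable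
      hZm (measurableSet_singleton 0) hZ0 ?_
    intro ω (hz : Z ω = 0)
    simp only [W, hY, hD, hz]
    ring
  rw [hW1, hW0, ← integral_sub (hWint D1 hD1m hD1bin) (hWint D0 hD0m hD0bin),
    ← integral_mul_sub_mul_sub_eq_setIntegral hD0m hD1m hY0m hY1m hD0bin hD1bin hmonoD hmonoY]
  congr 1 with ω
  ring

end

theorem wald_non_binary_outcome_general
    {Ω : Type} [MeasurableSpace Ω] (μ : Measure Ω) [IsProbabilityMeasure μ]
    (Z D0 D1 : Ω → ℝ) (Y0 Y1 : Ω → ℝ) (X : Ω → ℝ) (D Y : Ω → ℝ)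
    (hZm : Measurable Z) (hD0m : Measurable D0) (hD1m : Measurable D1)
    (hY0m : Measurable Y0) (hY1m : Measurable Y1)
    (hZbin : ∀ ω, Z ω = 0 ∨ Z ω = 1)
    (hD0bin : ∀ ω, D0 ω = 0 ∨ D0 ω = 1)
    (hD1bin : ∀ ω, D1 ω = 0 ∨ D1 ω = 1)
    (hY0int : Integrable Y0 μ) (hY1int : Integrable Y1 μ)
    (hD : ∀ ω, D ω = Z ω * D1 ω + (1 - Z ω) * D0 ω)
    (hY : ∀ ω, Y ω = D ω * Y1 ω + (1 - D ω) * Y0 ω)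
    (h : ℝ → ℝ) (hhm : Measurable h)
    (hint0 : Integrable (fun ω => h (X ω) * Y0 ω) μ)
    (hint1 : Integrable (fun ω => h (X ω) * Y1 ω) μ)
    (hindep : IndepFun (fun ω => (X ω, Y0 ω, Y1 ω, D0 ω, D1 ω)) Z μ)
    (hz0 : 0 < μ {ω | Z ω = 1}) (hz1 : μ {ω | Z ω = 1} < 1)
    (hmonoD : ∀ᵐ ω ∂μ, D0 ω ≤ D1 ω)
    (hmonoY : ∀ᵐ ω ∂μ, Y0 ω ≤ Y1 ω) :
    cmean μ (fun ω => h (X ω) * (Y1 ω - Y0 ω)) {ω | D0 ω < D1 ω ∧ Y0 ω < Y1 ω}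
        / cmean μ (fun ω => Y1 ω - Y0 ω) {ω | D0 ω < D1 ω ∧ Y0 ω < Y1 ω}
      = (cmean μ (fun ω => h (X ω) * Y ω) {ω | Z ω = 1}
          - cmean μ (fun ω => h (X ω) * Y ω) {ω | Z ω = 0})
        / (cmean μ Y {ω | Z ω = 1} - cmean μ Y {ω | Z ω = 0}) := by
  have hZ1 : μ {ω | Z ω = 1} ≠ 0 := hz0.ne'
  have hZ0 : μ {ω | Z ω = 0} ≠ 0 := by
    have hcompl : {ω | Z ω = 0} = {ω | Z ω = 1}ᶜ := by
      ext ω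
      rcases hZbin ω with hz | hz <;> simp [hz]
    rw [hcompl]
    exact (prob_compl_eq_zero_iff (hZm (measurableSet_singleton 1))).not.mpr hz1.ne
  have hnum := cmean_sub_cmean_eq_setIntegral (c := fun ω => h (X ω)) hZm hD0m hD1m hY0m hY1m
    hD0bin hD1bin hD hY hint0 hint1
    (hindep.comp (φ := fun p => (h p.1, p.2)) (by fun_prop) measurable_id) hZ1 hZ0 hmonoD hmonoY
  have hden := cmean_sub_cmean_eq_setIntegral (c := fun _ => 1) hZm hD0m hD1m hY0m hY1m
    hD0bin hD1bin hD hY (by simpa using hY0int) (by simpa using hY1int)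
    (hindep.comp (φ := fun p => (1, p.2)) (by fun_prop) measurable_id) hZ1 hZ0 hmonoD hmonoY
  simp only [one_mul] at hden
  rw [cmean_div_cmean, hnum, hden]

theorem wald_non_binary_outcome
    {Ω : Type} [MeasurableSpace Ω] (μ : Measure Ω) [IsProbabilityMeasure μ]
    (Z D0 D1 : Ω → ℝ) (Y0 Y1 : Ω → ℝ) (X : Ω → ℝ) (D Y : Ω → ℝ)
    (hZm : Measurable Z) (hD0m : Measurable D0) (hD1m : Measurable D1)
    (hY0m : Measurable Y0) (hY1m : Measurable Y1) (hXm : Measurable X)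
    (hZbin : ∀ ω, Z ω = 0 ∨ Z ω = 1)
    (hD0bin : ∀ ω, D0 ω = 0 ∨ D0 ω = 1)
    (hD1bin : ∀ ω, D1 ω = 0 ∨ D1 ω = 1)
    (hY0int : Integrable Y0 μ) (hY1int : Integrable Y1 μ)
    (hD : ∀ ω, D ω = Z ω * D1 ω + (1 - Z ω) * D0 ω)
    (hY : ∀ ω, Y ω = D ω * Y1 ω + (1 - D ω) * Y0 ω)
    (h : ℝ → ℝ) (hhm : Measurable h)
    (hint : Integrable (fun ω => h (X ω)) μ)
    (hint0 : Integrable (fun ω => h (X ω) * Y0 ω) μ)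
    (hint1 : Integrable (fun ω => h (X ω) * Y1 ω) μ)
    (hindep : IndepFun (fun ω => (X ω, Y0 ω, Y1 ω, D0 ω, D1 ω)) Z μ)
    (hz0 : 0 < μ {ω | Z ω = 1}) (hz1 : μ {ω | Z ω = 1} < 1)
    (hmonoD : ∀ᵐ ω ∂μ, D0 ω ≤ D1 ω)
    (hmonoY : ∀ᵐ ω ∂μ, Y0 ω ≤ Y1 ω)
    (hcc : 0 < μ {ω | D0 ω < D1 ω ∧ Y0 ω < Y1 ω}) :
    cmean μ (fun ω => h (X ω) * (Y1 ω - Y0 ω)) {ω | D0 ω < D1 ω ∧ Y0 ω < Y1 ω}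
        / cmean μ (fun ω => Y1 ω - Y0 ω) {ω | D0 ω < D1 ω ∧ Y0 ω < Y1 ω}
      = (cmean μ (fun ω => h (X ω) * Y ω) {ω | Z ω = 1}
          - cmean μ (fun ω => h (X ω) * Y ω) {ω | Z ω = 0})
        / (cmean μ Y {ω | Z ω = 1} - cmean μ Y {ω | Z ω = 0}) :=
  wald_non_binary_outcome_general μ Z D0 D1 Y0 Y1 X D Y hZm hD0m hD1m hY0m hY1m hZbin hD0bin hD1bin
    hY0int hY1int hD hY h hhm hint0 hint1 hindep hz0 hz1 hmonoD hmonoY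
end

section
/- Among the six treatment-control inequalities on observed cells — (1) Pr(Y=0,D=0|Z=1) ≤ Pr(Y=0,D=0|Z=0), (2) Pr(Y=0,D=1|Z=0) ≤ Pr(Y=0,D=1|Z=1), (3) Pr(Y=1,D=0|Z=1) ≤ Pr(Y=1,D=0|Z=0), (4) Pr(Y=1,D=1|Z=0) ≤ Pr(Y=1,D=1|Z=1), (5) Pr(Y=0|Z=1) ≤ Pr(Y=0|Z=0), (6) Pr(Y=1|Z=0) ≤ Pr(Y=1|Z=1) — inequalities (2), (3), and (6) imply the remaining three: (2) and (5) imply (1); (3) and (6) imply (4); and (5) is equivalent to (6). -/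
/-!
Conditionally on each value of `Z`, the cell probabilities are additive:
`Pr(Y=y, D=0 | z) + Pr(Y=y, D=1 | z) = Pr(Y=y | z)` and `Pr(Y=0 | z) + Pr(Y=1 | z) = 1`,
the latter because both values of `Z` have positive probability. Each claimed implication is a
linear consequence of these six identities.
-/

open MeasureTheory ProbabilityTheory

/-- Conditional probability of event `s` given event `t`. -/
noncomputable def cprob {Ω : Type} [MeasurableSpace Ω] (μ : Measure Ω)
    (s t : Set Ω) : ℝ :=
  (μ (s ∩ t)).toReal / (μ t).toReal

lemma setOf_eq_eq_compl_of_binary {Ω α : Type*} {X : Ω → α} {a b : α} (hab : a ≠ b)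
    (hX : ∀ ω, X ω = a ∨ X ω = b) : {ω | X ω = b} = {ω | X ω = a}ᶜ := by
  ext ω
  rcases hX ω with h | h <;> simp [h, hab, hab.symm]

lemma measure_compl_ne_zero_of_lt_one {Ω : Type*} [MeasurableSpace Ω] {μ : Measure Ω}
    [IsProbabilityMeasure μ] {s : Set Ω} (hs : μ s < 1) : μ sᶜ ≠ 0 := by
  intro h
  have := measure_univ_le_add_compl (μ := μ) s
  rw [measure_univ, h, add_zero] at this
  exact hs.not_ge this

section cprob

variable {Ω : Type} [MeasurableSpace Ω] {μ : Measure Ω} [IsFiniteMeasure μ]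

lemma cprob_inter_add_cprob_sdiff (s t : Set Ω) {u : Set Ω} (hu : MeasurableSet u) :
    cprob μ (s ∩ u) t + cprob μ (s \ u) t = cprob μ s t := by
  rw [cprob, cprob, cprob, ← add_div, ← ENNReal.toReal_add (measure_ne_top μ _)
    (measure_ne_top μ _), Set.inter_right_comm, ← Set.inter_sdiff_right_comm,
    measure_inter_add_sdiff _ hu]

lemma cprob_add_cprob_compl {s : Set Ω} (hs : MeasurableSet s) {t : Set Ω} (ht : μ t ≠ 0) :
    cprob μ s t + cprob μ sᶜ t = 1 := by
  have huniv : cprob μ Set.univ t = 1 := by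
    rw [cprob, Set.univ_inter, div_self (ENNReal.toReal_ne_zero.mpr ⟨ht, measure_ne_top μ t⟩)]
  rw [← huniv, ← cprob_inter_add_cprob_sdiff Set.univ t hs, Set.univ_inter,
    Set.compl_eq_univ_sdiff]

variable {α β : Type*} {X : Ω → α} {a b : α}

lemma cprob_and_add_cprob_and_of_binary (hab : a ≠ b) (hX : ∀ ω, X ω = a ∨ X ω = b)
    (hXa : MeasurableSet {ω | X ω = a}) (Y : Ω → β) (y : β) (t : Set Ω) :
    cprob μ {ω | Y ω = y ∧ X ω = a} t + cprob μ {ω | Y ω = y ∧ X ω = b} t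
      = cprob μ {ω | Y ω = y} t := by
  rw [← cprob_inter_add_cprob_sdiff {ω | Y ω = y} t hXa, Set.sdiff_eq,
    ← setOf_eq_eq_compl_of_binary hab hX]
  rfl

lemma cprob_add_cprob_of_binary (hab : a ≠ b) (hX : ∀ ω, X ω = a ∨ X ω = b)
    (hXa : MeasurableSet {ω | X ω = a}) {t : Set Ω} (ht : μ t ≠ 0) :
    cprob μ {ω | X ω = a} t + cprob μ {ω | X ω = b} t = 1 := by
  rw [setOf_eq_eq_compl_of_binary hab hX]
  exact cprob_add_cprob_compl hXa ht

end cprob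

theorem redundant_inequalities_general
    {Ω : Type} [MeasurableSpace Ω] (μ : Measure Ω) [IsProbabilityMeasure μ]
    (Z D Y : Ω → ℝ)
    (hDm : Measurable D) (hYm : Measurable Y)
    (hZbin : ∀ ω, Z ω = 0 ∨ Z ω = 1)
    (hDbin : ∀ ω, D ω = 0 ∨ D ω = 1)
    (hYbin : ∀ ω, Y ω = 0 ∨ Y ω = 1)
    (hz0 : 0 < μ {ω | Z ω = 1}) (hz1 : μ {ω | Z ω = 1} < 1) :
    -- ineq (1): Pr(Y=0,D=0|Z=1) ≤ Pr(Y=0,D=0|Z=0)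
    -- ineq (2): Pr(Y=0,D=1|Z=0) ≤ Pr(Y=0,D=1|Z=1)
    -- ineq (3): Pr(Y=1,D=0|Z=1) ≤ Pr(Y=1,D=0|Z=0)
    -- ineq (4): Pr(Y=1,D=1|Z=0) ≤ Pr(Y=1,D=1|Z=1)
    -- ineq (5): Pr(Y=0|Z=1) ≤ Pr(Y=0|Z=0)
    -- ineq (6): Pr(Y=1|Z=0) ≤ Pr(Y=1|Z=1)
    ((cprob μ {ω | Y ω = 0 ∧ D ω = 1} {ω | Z ω = 0}
          ≤ cprob μ {ω | Y ω = 0 ∧ D ω = 1} {ω | Z ω = 1}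
      → cprob μ {ω | Y ω = 0} {ω | Z ω = 1} ≤ cprob μ {ω | Y ω = 0} {ω | Z ω = 0}
      → cprob μ {ω | Y ω = 0 ∧ D ω = 0} {ω | Z ω = 1}
          ≤ cprob μ {ω | Y ω = 0 ∧ D ω = 0} {ω | Z ω = 0})
    ∧ (cprob μ {ω | Y ω = 1 ∧ D ω = 0} {ω | Z ω = 1}
          ≤ cprob μ {ω | Y ω = 1 ∧ D ω = 0} {ω | Z ω = 0}
      → cprob μ {ω | Y ω = 1} {ω | Z ω = 0} ≤ cprob μ {ω | Y ω = 1} {ω | Z ω = 1}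
      → cprob μ {ω | Y ω = 1 ∧ D ω = 1} {ω | Z ω = 0}
          ≤ cprob μ {ω | Y ω = 1 ∧ D ω = 1} {ω | Z ω = 1})
    ∧ (cprob μ {ω | Y ω = 0} {ω | Z ω = 1} ≤ cprob μ {ω | Y ω = 0} {ω | Z ω = 0}
        ↔ cprob μ {ω | Y ω = 1} {ω | Z ω = 0} ≤ cprob μ {ω | Y ω = 1} {ω | Z ω = 1})
    ∧ (cprob μ {ω | Y ω = 0 ∧ D ω = 1} {ω | Z ω = 0}
          ≤ cprob μ {ω | Y ω = 0 ∧ D ω = 1} {ω | Z ω = 1}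
      → cprob μ {ω | Y ω = 1 ∧ D ω = 0} {ω | Z ω = 1}
          ≤ cprob μ {ω | Y ω = 1 ∧ D ω = 0} {ω | Z ω = 0}
      → cprob μ {ω | Y ω = 1} {ω | Z ω = 0} ≤ cprob μ {ω | Y ω = 1} {ω | Z ω = 1}
      → (cprob μ {ω | Y ω = 0 ∧ D ω = 0} {ω | Z ω = 1}
            ≤ cprob μ {ω | Y ω = 0 ∧ D ω = 0} {ω | Z ω = 0}
        ∧ cprob μ {ω | Y ω = 1 ∧ D ω = 1} {ω | Z ω = 0}
            ≤ cprob μ {ω | Y ω = 1 ∧ D ω = 1} {ω | Z ω = 1}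
        ∧ cprob μ {ω | Y ω = 0} {ω | Z ω = 1}
            ≤ cprob μ {ω | Y ω = 0} {ω | Z ω = 0}))) := by
  have hZ0 : μ {ω | Z ω = 0} ≠ 0 := by
    rw [setOf_eq_eq_compl_of_binary one_ne_zero fun ω => (hZbin ω).symm]
    exact measure_compl_ne_zero_of_lt_one hz1
  have hY : ∀ t : Set Ω, μ t ≠ 0 →
      cprob μ {ω | Y ω = 0} t + cprob μ {ω | Y ω = 1} t = 1 := fun _ =>
    cprob_add_cprob_of_binary zero_ne_one hYbin (hYm (measurableSet_singleton 0))
  have hD := cprob_and_add_cprob_and_of_binary (μ := μ) zero_ne_one hDbin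
    (hDm (measurableSet_singleton 0)) Y
  have := hY _ hZ0
  have := hY _ hz0.ne'
  have := hD 0 {ω | Z ω = 0}
  have := hD 0 {ω | Z ω = 1}
  have := hD 1 {ω | Z ω = 0}
  have := hD 1 {ω | Z ω = 1}
  exact ⟨fun _ _ => by linarith, fun _ _ => by linarith,
    ⟨fun _ => by linarith, fun _ => by linarith⟩,
    fun _ _ _ => ⟨by linarith, by linarith, by linarith⟩⟩

theorem redundant_inequalities
    {Ω : Type} [MeasurableSpace Ω] (μ : Measure Ω) [IsProbabilityMeasure μ]
    (Z D Y : Ω → ℝ)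
    (hZm : Measurable Z) (hDm : Measurable D) (hYm : Measurable Y)
    (hZbin : ∀ ω, Z ω = 0 ∨ Z ω = 1)
    (hDbin : ∀ ω, D ω = 0 ∨ D ω = 1)
    (hYbin : ∀ ω, Y ω = 0 ∨ Y ω = 1)
    (hz0 : 0 < μ {ω | Z ω = 1}) (hz1 : μ {ω | Z ω = 1} < 1) :
    -- ineq (1): Pr(Y=0,D=0|Z=1) ≤ Pr(Y=0,D=0|Z=0)
    -- ineq (2): Pr(Y=0,D=1|Z=0) ≤ Pr(Y=0,D=1|Z=1)
    -- ineq (3): Pr(Y=1,D=0|Z=1) ≤ Pr(Y=1,D=0|Z=0)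
    -- ineq (4): Pr(Y=1,D=1|Z=0) ≤ Pr(Y=1,D=1|Z=1)
    -- ineq (5): Pr(Y=0|Z=1) ≤ Pr(Y=0|Z=0)
    -- ineq (6): Pr(Y=1|Z=0) ≤ Pr(Y=1|Z=1)
    ((cprob μ {ω | Y ω = 0 ∧ D ω = 1} {ω | Z ω = 0}
          ≤ cprob μ {ω | Y ω = 0 ∧ D ω = 1} {ω | Z ω = 1}
      → cprob μ {ω | Y ω = 0} {ω | Z ω = 1} ≤ cprob μ {ω | Y ω = 0} {ω | Z ω = 0}
      → cprob μ {ω | Y ω = 0 ∧ D ω = 0} {ω | Z ω = 1}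
          ≤ cprob μ {ω | Y ω = 0 ∧ D ω = 0} {ω | Z ω = 0})
    ∧ (cprob μ {ω | Y ω = 1 ∧ D ω = 0} {ω | Z ω = 1}
          ≤ cprob μ {ω | Y ω = 1 ∧ D ω = 0} {ω | Z ω = 0}
      → cprob μ {ω | Y ω = 1} {ω | Z ω = 0} ≤ cprob μ {ω | Y ω = 1} {ω | Z ω = 1}
      → cprob μ {ω | Y ω = 1 ∧ D ω = 1} {ω | Z ω = 0}
          ≤ cprob μ {ω | Y ω = 1 ∧ D ω = 1} {ω | Z ω = 1})
    ∧ (cprob μ {ω | Y ω = 0} {ω | Z ω = 1} ≤ cprob μ {ω | Y ω = 0} {ω | Z ω = 0}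
        ↔ cprob μ {ω | Y ω = 1} {ω | Z ω = 0} ≤ cprob μ {ω | Y ω = 1} {ω | Z ω = 1})
    ∧ (cprob μ {ω | Y ω = 0 ∧ D ω = 1} {ω | Z ω = 0}
          ≤ cprob μ {ω | Y ω = 0 ∧ D ω = 1} {ω | Z ω = 1}
      → cprob μ {ω | Y ω = 1 ∧ D ω = 0} {ω | Z ω = 1}
          ≤ cprob μ {ω | Y ω = 1 ∧ D ω = 0} {ω | Z ω = 0}
      → cprob μ {ω | Y ω = 1} {ω | Z ω = 0} ≤ cprob μ {ω | Y ω = 1} {ω | Z ω = 1}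
      → (cprob μ {ω | Y ω = 0 ∧ D ω = 0} {ω | Z ω = 1}
            ≤ cprob μ {ω | Y ω = 0 ∧ D ω = 0} {ω | Z ω = 0}
        ∧ cprob μ {ω | Y ω = 1 ∧ D ω = 1} {ω | Z ω = 0}
            ≤ cprob μ {ω | Y ω = 1 ∧ D ω = 1} {ω | Z ω = 1}
        ∧ cprob μ {ω | Y ω = 0} {ω | Z ω = 1}
            ≤ cprob μ {ω | Y ω = 0} {ω | Z ω = 0}))) :=
  redundant_inequalities_general μ Z D Y hDm hYm hZbin hDbin hYbin hz0 hz1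
end
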